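/- arXiv:2311.11468 — 4 statements merged into one kernel-verified Lean document; each statement's English description precedes it below -/
import Mathlib

section
/- Let p > 3 be a prime and suppose x ∈ X*(p) is connected to (1,1,1) in the Markoff mod p graph G_p by a path of length ℓ ≥ 1 (i.e., x = rot_{i_s}^{n_s} ⋯ rot_{i_1}^{n_1}(1,1,1) in (Z/pZ)³ with n₁ + ⋯ + n_s = ℓ, each n_j ≥ 1 and i_j ∈ {1,2,3}). Then x has a lift x̃ that is a Markoff triple with size(x̃) < (3ε)^{2^{4ℓ}}, where ε = (3+√5)/2. -/
namespace Markoff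

variable {R : Type*} [CommRing R]

/-- The three rotations acting on triples. -/
def rot (i : Fin 3) : R × R × R → R × R × R :=
  ![fun x => (x.1, x.2.2, 3 * x.1 * x.2.2 - x.2.1),
    fun x => (x.2.2, x.2.1, 3 * x.2.1 * x.2.2 - x.1),
    fun x => (x.2.1, 3 * x.2.1 * x.2.2 - x.1, x.2.2)] i

/-- The `i`-th coordinate of a triple. -/
def coord (i : Fin 3) (x : R × R × R) : R := ![x.1, x.2.1, x.2.2] i

/-- The Markoff equation. -/
def IsMarkoff (x : R × R × R) : Prop :=
  x.1 ^ 2 + x.2.1 ^ 2 + x.2.2 ^ 2 = 3 * x.1 * x.2.1 * x.2.2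

/-- The nonzero Markoff points mod `p`. -/
def Xstar (p : ℕ) : Set (ZMod p × ZMod p × ZMod p) :=
  {x | IsMarkoff x ∧ x ≠ (0, 0, 0)}

/-- The rotations as permutations. -/
def rotPerm (i : Fin 3) : Equiv.Perm (R × R × R) where
  toFun := rot i
  invFun := ![fun y => (y.1, 3 * y.1 * y.2.1 - y.2.2, y.2.1),
              fun y => (3 * y.1 * y.2.1 - y.2.2, y.2.1, y.1),
              fun y => (3 * y.1 * y.2.2 - y.2.1, y.1, y.2.2)] i
  left_inv := by
    fin_cases i <;> rintro ⟨a, b, c⟩ <;>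
      simp [rot, Matrix.cons_val_zero, Matrix.cons_val_one] <;> ring
  right_inv := by
    fin_cases i <;> rintro ⟨a, b, c⟩ <;>
      simp [rot, Matrix.cons_val_zero, Matrix.cons_val_one] <;> ring

/-- The `i`-th rotation order: the least `n > 0` with `rot i ^[n] x = x`. -/
noncomputable def ordi (p : ℕ) (i : Fin 3) (x : ZMod p × ZMod p × ZMod p) : ℕ :=
  sInf {n | 0 < n ∧ (rot i)^[n] x = x}

/-- The rotation order: max of the three rotation orders. -/
noncomputable def ordp (p : ℕ) (x : ZMod p × ZMod p × ZMod p) : ℕ :=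
  max (ordi p 0 x) (max (ordi p 1 x) (ordi p 2 x))

/-- The size of an integer triple. -/
def size (x : ℤ × ℤ × ℤ) : ℤ := max x.1 (max x.2.1 x.2.2)

/-- `t` is a lift of `x` mod `p`. -/
def IsLift (p : ℕ) (t : ℤ × ℤ × ℤ) (x : ZMod p × ZMod p × ZMod p) : Prop :=
  IsMarkoff t ∧ ((t.1 : ZMod p), (t.2.1 : ZMod p), (t.2.2 : ZMod p)) = x

noncomputable def eps : ℝ := (3 + Real.sqrt 5) / 2

/-- Apply a word of rotations: `rotWord [(i₁,n₁),…,(i_s,n_s)] x = rot_{i_s}^{n_s} ⋯ rot_{i_1}^{n_1} x`. -/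
def rotWord (w : List (Fin 3 × ℕ)) (x : R × R × R) : R × R × R :=
  w.foldl (fun y q => (rot q.1)^[q.2] y) x

/-- `x` is a maximal triple. -/
def IsMax (p : ℕ) (x : ZMod p × ZMod p × ZMod p) : Prop :=
  ∃ i : Fin 3, ordi p i x = p - 1 ∨ ordi p i x = p + 1 ∨ ordi p i x = 2 * p

/-- The cage: maximal triples in `X*(p)`. -/
def Cage (p : ℕ) : Set (ZMod p × ZMod p × ZMod p) :=
  {x ∈ Xstar p | IsMax p x}

/-- The conic section `C_i(a)`. -/
def Ci (p : ℕ) (i : Fin 3) (a : ZMod p) : Set (ZMod p × ZMod p × ZMod p) :=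
  {x ∈ Xstar p | coord i x = a}


section Aux

lemma isMarkoff_rot (i : Fin 3) {x : R × R × R} (h : IsMarkoff x) : IsMarkoff (rot i x) := by
  obtain ⟨a, b, c⟩ := x
  simp only [IsMarkoff] at h
  fin_cases i <;> simp [rot, IsMarkoff] <;> linear_combination h

lemma isMarkoff_iterate (i : Fin 3) (n : ℕ) {x : R × R × R} (h : IsMarkoff x) :
    IsMarkoff ((rot i)^[n] x) := by
  induction n with
  | zero => simpa
  | succ n ih => rw [Function.iterate_succ_apply']; exact isMarkoff_rot i ih

lemma isMarkoff_rotWord (w : List (Fin 3 × ℕ)) {x : R × R × R} (h : IsMarkoff x) :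
    IsMarkoff (rotWord w x) := by
  induction w generalizing x with
  | nil => simpa [rotWord]
  | cons q w ih => exact ih (isMarkoff_iterate q.1 q.2 h)

def phi (p : ℕ) (t : ℤ × ℤ × ℤ) : ZMod p × ZMod p × ZMod p :=
  ((t.1 : ZMod p), (t.2.1 : ZMod p), (t.2.2 : ZMod p))

lemma phi_rot (p : ℕ) (i : Fin 3) (t : ℤ × ℤ × ℤ) :
    phi p (rot i t) = rot i (phi p t) := by
  obtain ⟨a, b, c⟩ := t
  fin_cases i <;> simp [phi, rot]

lemma phi_iterate (p : ℕ) (i : Fin 3) (n : ℕ) (t : ℤ × ℤ × ℤ) :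
    phi p ((rot i)^[n] t) = (rot i)^[n] (phi p t) :=
  (Function.Semiconj.iterate_right (phi_rot p i) n) t

lemma phi_rotWord (p : ℕ) (w : List (Fin 3 × ℕ)) (t : ℤ × ℤ × ℤ) :
    phi p (rotWord w t) = rotWord w (phi p t) := by
  induction w generalizing t with
  | nil => rfl
  | cons q w ih => rw [rotWord, List.foldl_cons, ← rotWord, ih, phi_iterate]; rfl

/-- Size-bound sequence: `cseq 0 = 1`, `cseq (n+1) = 4 * (cseq n)^2`. -/
def cseq : ℕ → ℤ
  | 0 => 1
  | n + 1 => 4 * (cseq n) ^ 2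

lemma one_le_cseq (n : ℕ) : 1 ≤ cseq n := by
  induction n with
  | zero => simp [cseq]
  | succ n ih => simp only [cseq]; nlinarith

def Bnd (M : ℤ) (t : ℤ × ℤ × ℤ) : Prop := |t.1| ≤ M ∧ |t.2.1| ≤ M ∧ |t.2.2| ≤ M

lemma bnd_key {a b c M : ℤ} (ha : |a| ≤ M) (hb : |b| ≤ M) (hc : |c| ≤ M) (hM : 1 ≤ M) :
    |3 * a * b - c| ≤ 4 * M ^ 2 := by
  have h1 : |3 * a * b - c| ≤ |3 * a * b| + |c| := abs_sub _ _
  have h2 : |3 * a * b| = 3 * |a| * |b| := by rw [abs_mul, abs_mul]; simp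
  nlinarith [abs_nonneg a, abs_nonneg b, abs_nonneg c]

lemma bnd_rot {M : ℤ} (hM : 1 ≤ M) (i : Fin 3) {t : ℤ × ℤ × ℤ} (h : Bnd M t) :
    Bnd (4 * M ^ 2) (rot i t) := by
  obtain ⟨a, b, c⟩ := t
  obtain ⟨ha, hb, hc⟩ := h
  have hup : ∀ z : ℤ, |z| ≤ M → |z| ≤ 4 * M ^ 2 := fun z hz => by nlinarith
  fin_cases i <;> simp only [rot, Matrix.cons_val_zero, Matrix.cons_val_one,
      Matrix.head_cons, Matrix.cons_val_two, Matrix.tail_cons] <;>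
    exact ⟨by first | exact hup _ ‹_› | exact bnd_key ‹_› ‹_› ‹_› hM,
           by first | exact hup _ ‹_› | exact bnd_key ‹_› ‹_› ‹_› hM,
           by first | exact hup _ ‹_› | exact bnd_key ‹_› ‹_› ‹_› hM⟩

lemma bnd_cseq_succ {n : ℕ} (i : Fin 3) {t : ℤ × ℤ × ℤ} (h : Bnd (cseq n) t) :
    Bnd (cseq (n + 1)) (rot i t) := bnd_rot (one_le_cseq n) i h

lemma bnd_iterate {n : ℕ} (i : Fin 3) (m : ℕ) {t : ℤ × ℤ × ℤ} (h : Bnd (cseq n) t) :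
    Bnd (cseq (n + m)) ((rot i)^[m] t) := by
  induction m with
  | zero => simpa
  | succ m ih => rw [Function.iterate_succ_apply', ← Nat.add_assoc]; exact bnd_cseq_succ i ih

lemma bnd_rotWord (w : List (Fin 3 × ℕ)) (n : ℕ) {t : ℤ × ℤ × ℤ} (h : Bnd (cseq n) t) :
    Bnd (cseq (n + (w.map Prod.snd).sum)) (rotWord w t) := by
  induction w generalizing t n with
  | nil => simpa [rotWord]
  | cons q w ih =>
    have := ih (n := n + q.2) (bnd_iterate q.1 q.2 h)
    rw [rotWord, List.foldl_cons, ← rotWord]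
    simpa [Nat.add_assoc] using this

lemma cseq_le (n : ℕ) : cseq n ≤ 4 ^ (2 ^ n - 1) := by
  induction n with
  | zero => simp [cseq]
  | succ n ih =>
    have h1 : (1:ℕ) ≤ 2 ^ n := Nat.one_le_two_pow
    have he : 2 * (2 ^ n - 1) + 1 = 2 ^ (n + 1) - 1 := by
      rw [pow_succ]; omega
    have hc : (0:ℤ) ≤ cseq n := le_trans zero_le_one (one_le_cseq n)
    calc cseq (n + 1) = 4 * (cseq n) ^ 2 := rfl
      _ ≤ 4 * ((4:ℤ) ^ (2 ^ n - 1)) ^ 2 := by nlinarith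
      _ = 4 ^ (2 * (2 ^ n - 1) + 1) := by rw [← pow_mul, Nat.mul_comm]; ring
      _ = 4 ^ (2 ^ (n + 1) - 1) := by rw [he]

end Aux

theorem stmt_1 (p : ℕ) (hp : p.Prime) (hp3 : 3 < p)
    (x : ZMod p × ZMod p × ZMod p) (hx : x ∈ Xstar p) (ℓ : ℕ) (hℓ : 1 ≤ ℓ)
    (hpath : ∃ w : List (Fin 3 × ℕ), w ≠ [] ∧ (∀ q ∈ w, 1 ≤ q.2) ∧
      (w.map Prod.snd).sum = ℓ ∧ x = rotWord w (1, 1, 1)) :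
    ∃ t, IsLift p t x ∧ (size t : ℝ) < (3 * eps) ^ (2 ^ (4 * ℓ)) := by
  obtain ⟨w, -, -, hsum, hxw⟩ := hpath
  refine ⟨rotWord w ((1, 1, 1) : ℤ × ℤ × ℤ), ⟨?_, ?_⟩, ?_⟩
  · exact isMarkoff_rotWord w (by simp [IsMarkoff])
  · have := phi_rotWord p w (1, 1, 1)
    simp only [phi] at this
    rw [hxw]
    simpa using this
  · -- size bound
    set t := rotWord w ((1, 1, 1) : ℤ × ℤ × ℤ) with ht
    have hb0 : Bnd (cseq 0) ((1, 1, 1) : ℤ × ℤ × ℤ) := by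
      refine ⟨?_, ?_, ?_⟩ <;> simp [cseq]
    have hb := bnd_rotWord w 0 hb0
    rw [hsum] at hb
    simp only [Nat.zero_add] at hb
    obtain ⟨h1, h2, h3⟩ := hb
    have hsize : size t ≤ cseq ℓ := by
      refine max_le (le_trans (le_abs_self _) h1) (max_le ?_ ?_)
      · exact le_trans (le_abs_self _) h2
      · exact le_trans (le_abs_self _) h3
    have hcast : (size t : ℝ) ≤ ((4:ℝ) ^ (2 ^ ℓ - 1)) := by
      have := le_trans hsize (cseq_le ℓ)
      exact_mod_cast this
    have heps : (4:ℝ) < 3 * eps := by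
      have h5 : (0:ℝ) ≤ Real.sqrt 5 := Real.sqrt_nonneg 5
      simp only [eps]; linarith
    have hlt : ((4:ℝ) ^ (2 ^ ℓ - 1)) < (3 * eps) ^ (2 ^ (4 * ℓ)) := by
      calc ((4:ℝ) ^ (2 ^ ℓ - 1)) ≤ (4:ℝ) ^ (2 ^ (4 * ℓ)) := by
            apply pow_le_pow_right₀ (by norm_num)
            exact le_trans (Nat.sub_le _ _)
              (Nat.pow_le_pow_right (by norm_num) (by omega))
        _ < (3 * eps) ^ (2 ^ (4 * ℓ)) := by
            exact pow_lt_pow_left₀ heps (by norm_num) (Nat.two_pow_pos _).ne'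
    linarith


end Markoff
end

section
/- Let p > 3 be a prime, a ∈ Z/pZ with a ≠ 0, and let C_i(a) = {x ∈ X*(p) : x_i = a}. If a is parabolic (9a² − 4 = 0), then |C_i(a)| = 0 when p ≡ 3 (mod 4) and |C_i(a)| = 2p when p ≡ 1 (mod 4). If a is elliptic (9a² − 4 a nonsquare mod p), then |C_i(a)| = p + 1, and if a is hyperbolic (9a² − 4 a nonzero square mod p), then |C_i(a)| = p − 1. -/
open Finset

section QuadraticCount

variable {F : Type*} [Field F] [Fintype F] [DecidableEq F]

lemma sum_quadraticChar_add_mul (c : F) {D : F} (hD : D ≠ 0) (hF : ringChar F ≠ 2) :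
    ∑ t : F, quadraticChar F (c + D * t) = 0 := by
  rw [← quadraticChar_sum_zero hF]
  exact Fintype.sum_bijective (fun t => c + D * t)
    ((add_right_injective c).comp (mul_right_injective₀ hD)).bijective_of_finite _ _ fun _ => rfl

lemma sum_quadraticChar_mul_add_mul {c : F} (hc : c ≠ 0) (D : F) (hF : ringChar F ≠ 2) :
    ∑ t : F, quadraticChar F (t * (c + D * t)) = -quadraticChar F D := by
  -- `t * (c + D * t) = t ^ 2 * (c * t⁻¹ + D)` for `t ≠ 0`, and `t ↦ c * t⁻¹ + D` permutes `F`;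
  -- the `if` corrects the junk value `0⁻¹ = 0`.
  have hsplit : ∀ t : F, quadraticChar F (t * (c + D * t))
      = quadraticChar F (c * t⁻¹ + D) - if t = 0 then quadraticChar F D else 0 := by
    intro t
    rcases eq_or_ne t 0 with rfl | ht
    · simp
    · rw [if_neg ht, sub_zero, show t * (c + D * t) = t ^ 2 * (c * t⁻¹ + D) by field_simp,
        map_mul, quadraticChar_sq_one' ht, one_mul]
  have hbij : Function.Bijective fun t : F => c * t⁻¹ + D :=
    ((add_left_injective D).comp ((mul_right_injective₀ hc).comp inv_injective)).bijective_of_finite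
  rw [Fintype.sum_congr _ _ hsplit, sum_sub_distrib, sum_ite_eq' univ (0 : F), if_pos (mem_univ _),
    Fintype.sum_bijective _ hbij _ (quadraticChar F) fun _ => rfl, quadraticChar_sum_zero hF,
    zero_sub]

lemma sum_apply_sq (f : F → ℤ) (hF : ringChar F ≠ 2) :
    ∑ y : F, f (y ^ 2) = ∑ t : F, (quadraticChar F t + 1) * f t := by
  rw [← sum_fiberwise univ (fun y : F => y ^ 2)]
  refine Fintype.sum_congr _ _ fun t => ?_
  rw [sum_congr rfl fun y hy => by rw [(mem_filter.1 hy).2], sum_const, nsmul_eq_mul,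
    ← quadraticChar_card_sqrts hF t, Set.toFinset_ofPred]

lemma sum_quadraticChar_add_mul_sq {c D : F} (hc : c ≠ 0) (hD : D ≠ 0) (hF : ringChar F ≠ 2) :
    ∑ y : F, quadraticChar F (c + D * y ^ 2) = -quadraticChar F D := by
  rw [sum_apply_sq (fun t => quadraticChar F (c + D * t)) hF]
  simp only [add_mul, one_mul, ← map_mul, sum_add_distrib, sum_quadraticChar_add_mul c hD hF,
    sum_quadraticChar_mul_add_mul hc D hF, add_zero]

lemma card_sq_sub_mul_sq_eq (D c : F) (hF : ringChar F ≠ 2) :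
    (#{z : F × F | z.1 ^ 2 - D * z.2 ^ 2 = c} : ℤ)
      = Fintype.card F + ∑ y : F, quadraticChar F (c + D * y ^ 2) := by
  have hfiber : ∀ y : F,
      #{u : F | u ^ 2 - D * y ^ 2 = c} = #{u : F | u ^ 2 = c + D * y ^ 2} := by
    intro y
    simp only [sub_eq_iff_eq_add]
  rw [card_filter, Fintype.sum_prod_type_right, Nat.cast_sum, Fintype.card_eq_sum_ones (α := F),
    Nat.cast_sum, ← sum_add_distrib]
  refine Fintype.sum_congr _ _ fun y => ?_
  rw [← card_filter, hfiber, ← Set.toFinset_ofPred, quadraticChar_card_sqrts hF, Nat.cast_one,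
    add_comm]

lemma card_markoff_fibre_eq_card_sq_sub_mul_sq (a : F) (h2 : (2 : F) ≠ 0) :
    #{z : F × F | z.1 ^ 2 + z.2 ^ 2 + a ^ 2 = 3 * a * z.1 * z.2}
      = #{z : F × F | z.1 ^ 2 - (9 * a ^ 2 - 4) * z.2 ^ 2 = -(4 * a ^ 2)} := by
  apply card_nbij' (fun z => (2 * z.1 - 3 * a * z.2, z.2))
    (fun w => ((w.1 + 3 * a * w.2) / 2, w.2))
  · rintro ⟨x, y⟩ hz
    simp only [coe_filter, mem_univ, true_and, Set.mem_ofPred_eq] at hz ⊢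
    linear_combination 4 * hz
  · rintro ⟨u, y⟩ hw
    simp only [coe_filter, mem_univ, true_and, Set.mem_ofPred_eq] at hw ⊢
    field_simp
    linear_combination hw
  · rintro ⟨x, y⟩ -
    simp only [Prod.mk.injEq, and_true]
    field_simp
    ring
  · rintro ⟨u, y⟩ -
    simp only [Prod.mk.injEq, and_true]
    field_simp
    ring

end QuadraticCount

namespace Markoff

lemma ncard_Ci {p : ℕ} [NeZero p] (i : Fin 3) {a : ZMod p} (ha : a ≠ 0) :
    (Ci p i a).ncard
      = #{z : ZMod p × ZMod p | z.1 ^ 2 + z.2 ^ 2 + a ^ 2 = 3 * a * z.1 * z.2} := by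
  obtain ⟨e, he, hCi⟩ : ∃ e : ZMod p × ZMod p → ZMod p × ZMod p × ZMod p, e.Injective ∧
      Ci p i a = e '' {z | z.1 ^ 2 + z.2 ^ 2 + a ^ 2 = 3 * a * z.1 * z.2} := by
    fin_cases i <;>
      [use fun z => (a, z.1, z.2); use fun z => (z.1, a, z.2); use fun z => (z.1, z.2, a)] <;>
      refine ⟨fun z w h => by simpa [Prod.ext_iff] using h, ?_⟩ <;>
      ext ⟨x, y, z⟩ <;>
      simp only [Ci, Xstar, IsMarkoff, coord, Set.mem_ofPred_eq, Set.mem_image, Prod.exists,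
        Prod.mk.injEq, ne_eq, not_and, Fin.zero_eta, Fin.mk_one, Fin.reduceFinMk, Fin.isValue,
        Matrix.cons_val, Matrix.cons_val_zero, Matrix.cons_val_one, existsAndEq, and_true,
        true_and, exists_eq_right_right] <;>
      constructor
    all_goals first
      | rintro ⟨⟨h, -⟩, rfl⟩; exact ⟨by linear_combination h, rfl⟩
      | rintro ⟨h, rfl⟩; exact ⟨⟨by linear_combination h, by simp [ha]⟩, rfl⟩
  rw [hCi, Set.ncard_image_of_injective _ he, ← Set.ncard_coe_finset, coe_filter_univ]

theorem stmt_11 (p : ℕ) (hp : p.Prime) (hp3 : 3 < p) (i : Fin 3)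
    (a : ZMod p) (ha : a ≠ 0) :
    (9 * a ^ 2 - 4 = 0 →
      (p % 4 = 3 → (Ci p i a).ncard = 0) ∧ (p % 4 = 1 → (Ci p i a).ncard = 2 * p)) ∧
    (¬ IsSquare (9 * a ^ 2 - 4) → (Ci p i a).ncard = p + 1) ∧
    (9 * a ^ 2 - 4 ≠ 0 ∧ IsSquare (9 * a ^ 2 - 4) → (Ci p i a).ncard = p - 1) := by
  have := Fact.mk hp
  have hF : ringChar (ZMod p) ≠ 2 := by rw [ZMod.ringChar_zmod_n]; omega
  have h2a : 2 * a ≠ 0 := mul_ne_zero (Ring.two_ne_zero hF) ha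
  have hc : -(4 * a ^ 2) = -1 * (2 * a) ^ 2 := by ring
  have hc0 : -(4 * a ^ 2) ≠ 0 := by
    rw [hc]
    exact mul_ne_zero (neg_ne_zero.2 one_ne_zero) (pow_ne_zero 2 h2a)
  have hcard : ((Ci p i a).ncard : ℤ)
      = p + ∑ y, quadraticChar (ZMod p) (-(4 * a ^ 2) + (9 * a ^ 2 - 4) * y ^ 2) := by
    rw [ncard_Ci i ha, card_markoff_fibre_eq_card_sq_sub_mul_sq a (Ring.two_ne_zero hF),
      card_sq_sub_mul_sq_eq _ _ hF, ZMod.card]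
  refine ⟨fun hpar => ?_, fun hell => ?_, fun ⟨hne, hsq⟩ => ?_⟩
  · have hχ : quadraticChar (ZMod p) (-(4 * a ^ 2)) = ZMod.χ₄ p := by
      rw [hc, map_mul, quadraticChar_sq_one' h2a, mul_one, quadraticChar_neg_one hF, ZMod.card]
    simp only [hpar, zero_mul, add_zero, hχ, sum_const, card_univ, ZMod.card, nsmul_eq_mul] at hcard
    refine ⟨fun hp4 => ?_, fun hp4 => ?_⟩
    · rw [ZMod.χ₄_nat_three_mod_four hp4] at hcard
      omega
    · rw [ZMod.χ₄_nat_one_mod_four hp4] at hcard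
      omega
  · have hD : 9 * a ^ 2 - 4 ≠ 0 := fun h => hell (h ▸ IsSquare.zero)
    rw [sum_quadraticChar_add_mul_sq hc0 hD hF,
      quadraticChar_neg_one_iff_not_isSquare.2 hell] at hcard
    omega
  · rw [sum_quadraticChar_add_mul_sq hc0 hne hF, (quadraticChar_one_iff_isSquare hne).2 hsq] at hcard
    omega

end Markoff
end

section
/- Let p > 3 be a prime and let x, y ∈ C(p) be maximal triples with maximal indices i and j respectively. Then there exists a maximal triple z ∈ C(p) and an index k ∈ {1,2,3} such that C_i(x_i) ∩ C_k(z_k) ≠ ∅ and C_j(y_j) ∩ C_k(z_k) ≠ ∅. -/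
namespace Markoff

variable {R : Type*} [CommRing R]

/-!
The rotation `rot i` fixes the `i`-th coordinate `a` and acts on the other two by the linear map
`w ↦ (w₂, 3a w₂ - w₁)`. For `w` on the conic `C_i(a)` the determinant of `w` and its image is
`a²`, so for `a ≠ 0` they span the plane and every period of one point of the conic is a period
of all of them; for `a = 0` the map has order `4` on nonzero vectors. Hence the `i`-th rotation
order is constant on `C_i(a)`, and every point of `C_i(x_i)` is maximal.

A value `u` is a second coordinate of a point of `C_i(a)` iff `(9a² - 4)u² - 4a²` is a square,
and counting the values of `(m + e / m) / 2` shows this happens for at least `(p + 1) / 2` values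
of `u`. So `C_i(x_i)` and `C_j(y_j)` have points `z` and `w` with the same value `c` in a third
coordinate `k`, and `C_k(c)` contains both.
-/

section Conic

variable {R : Type*} [CommRing R]

def conicRot (a : R) : (R × R) →ₗ[R] R × R :=
  (LinearMap.snd R R R).prod ((3 * a) • LinearMap.snd R R R - LinearMap.fst R R R)

@[simp]
lemma conicRot_apply (a : R) (w : R × R) : conicRot a w = (w.2, 3 * a * w.2 - w.1) := by
  simp [conicRot, mul_assoc]

def OnConic (a : R) (w : R × R) : Prop :=
  w.1 ^ 2 + w.2 ^ 2 + a ^ 2 = 3 * a * w.1 * w.2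

def IsConicPt (a : R) (w : R × R) : Prop :=
  OnConic a w ∧ ¬(a = 0 ∧ w = 0)

lemma IsConicPt.swap {a u v : R} (h : IsConicPt a (u, v)) : IsConicPt a (v, u) := by
  obtain ⟨h, h0⟩ := h
  refine ⟨by unfold OnConic at h ⊢; linear_combination h, ?_⟩
  simp only [Prod.mk_eq_zero] at h0 ⊢
  tauto

def insertCoord (i : Fin 3) (a : R) (w : R × R) : R × R × R :=
  ![(a, w.1, w.2), (w.1, a, w.2), (w.1, w.2, a)] i

def otherCoords (i : Fin 3) (x : R × R × R) : R × R :=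
  ![(x.2.1, x.2.2), (x.1, x.2.2), (x.1, x.2.1)] i

omit [CommRing R] in
lemma insertCoord_coord_otherCoords (i : Fin 3) (x : R × R × R) :
    insertCoord i (coord i x) (otherCoords i x) = x := by
  fin_cases i <;> rfl

omit [CommRing R] in
lemma coord_insertCoord (i : Fin 3) (a : R) (w : R × R) : coord i (insertCoord i a w) = a := by
  fin_cases i <;> rfl

omit [CommRing R] in
lemma insertCoord_injective (i : Fin 3) (a : R) : Function.Injective (insertCoord i a) := by
  rintro ⟨u, v⟩ ⟨u', v'⟩ h
  fin_cases i <;> simp_all [insertCoord]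

lemma isMarkoff_insertCoord_iff (i : Fin 3) (a : R) (w : R × R) :
    IsMarkoff (insertCoord i a w) ↔ OnConic a w := by
  fin_cases i <;> simp [insertCoord, IsMarkoff, OnConic] <;> constructor <;> intro h <;>
    linear_combination h

lemma insertCoord_eq_zero_iff (i : Fin 3) (a : R) (w : R × R) :
    insertCoord i a w = (0, 0, 0) ↔ a = 0 ∧ w = 0 := by
  fin_cases i <;> simp [insertCoord, Prod.ext_iff] <;> tauto

lemma rot_iterate_insertCoord (i : Fin 3) (a : R) (w : R × R) (n : ℕ) :
    (rot i)^[n] (insertCoord i a w) = insertCoord i a ((conicRot a)^[n] w) := by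
  have hrot : Function.Semiconj (insertCoord i a) (conicRot a) (rot i) := by
    intro w
    fin_cases i <;> simp [insertCoord, rot, mul_right_comm]
  exact (hrot.iterate_right n w).symm

lemma exists_coord_insertCoord_eq {i k : Fin 3} (hki : k ≠ i) {a c v : R}
    (h : IsConicPt a (c, v)) :
    ∃ w, IsConicPt a w ∧ coord k (insertCoord i a w) = c := by
  fin_cases i <;> fin_cases k <;>
    first | exact absurd rfl hki | exact ⟨_, h, rfl⟩ | exact ⟨_, h.swap, rfl⟩

end Conic

section ConicRot

variable {F : Type*} [Field F]

lemma exists_eq_smul_add_smul_conicRot {a : F} (ha : a ≠ 0) {w : F × F} (hw : OnConic a w)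
    (w' : F × F) : ∃ α β : F, w' = α • w + β • conicRot a w := by
  refine ⟨(w'.1 * (3 * a * w.2 - w.1) - w.2 * w'.2) / a ^ 2,
    (w.1 * w'.2 - w.2 * w'.1) / a ^ 2, ?_⟩
  unfold OnConic at hw
  ext <;> simp only [Prod.fst_add, Prod.snd_add, Prod.smul_fst, Prod.smul_snd, smul_eq_mul,
    conicRot_apply] <;> field_simp
  · linear_combination w'.1 * hw
  · linear_combination w'.2 * hw

lemma iterate_conicRot_eq_self_of_ne_zero {a : F} (ha : a ≠ 0) {w : F × F} (hw : OnConic a w)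
    {n : ℕ} (hn : (conicRot a)^[n] w = w) (w' : F × F) : (conicRot a)^[n] w' = w' := by
  have hn' : (conicRot a)^[n] (conicRot a w) = conicRot a w := by
    rw [← Function.iterate_succ_apply, Function.iterate_succ_apply', hn]
  obtain ⟨α, β, rfl⟩ := exists_eq_smul_add_smul_conicRot ha hw w'
  rw [← Module.End.pow_apply] at hn hn' ⊢
  rw [map_add, map_smul, map_smul, hn, hn']

lemma iterate_conicRot_zero_eq_self_iff (h2 : (2 : F) ≠ 0) {w : F × F} (hw : w ≠ 0) (n : ℕ) :
    (conicRot (0 : F))^[n] w = w ↔ 4 ∣ n := by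
  have hfour : (conicRot (0 : F))^[4] = id := by
    funext w
    simp [Function.iterate_succ]
  obtain ⟨u, v⟩ := w
  have huv : ¬(u = 0 ∧ v = 0) := by simpa using hw
  have hneg : ∀ t : F, -t = t → t = 0 := fun t ht =>
    (mul_eq_zero.1 (by linear_combination -ht : (2 : F) * t = 0)).resolve_left h2
  rw [← Nat.div_add_mod n 4, Function.iterate_add_apply, Function.iterate_mul, hfour,
    Function.iterate_id, id, Nat.dvd_add_right (dvd_mul_right _ _)]
  have hr : n % 4 < 4 := Nat.mod_lt _ (by norm_num)
  interval_cases n % 4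
  all_goals simp [Prod.ext_iff]
  all_goals refine fun h h' => huv ⟨hneg _ ?_, hneg _ ?_⟩
  · linear_combination h' + h
  · linear_combination h' - h
  · exact h
  · exact h'
  · linear_combination h - h'
  · linear_combination h + h'

lemma IsConicPt.iterate_conicRot_eq_self (h2 : (2 : F) ≠ 0) {a : F} {w w' : F × F}
    (hw : IsConicPt a w) (hw' : IsConicPt a w') {n : ℕ} (hn : (conicRot a)^[n] w = w) :
    (conicRot a)^[n] w' = w' := by
  rcases eq_or_ne a 0 with rfl | ha
  · rw [iterate_conicRot_zero_eq_self_iff h2 (fun h => hw'.2 ⟨rfl, h⟩)]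
    exact (iterate_conicRot_zero_eq_self_iff h2 (fun h => hw.2 ⟨rfl, h⟩) n).1 hn
  · exact iterate_conicRot_eq_self_of_ne_zero ha hw.1 hn w'

end ConicRot

section Count

open Finset

variable {F : Type*} [Field F]

lemma isSquare_sq_sub_iff (h2 : (2 : F) ≠ 0) {e : F} (he : e ≠ 0) (w : F) :
    IsSquare (w ^ 2 - e) ↔ ∃ m ≠ 0, (m + e / m) / 2 = w := by
  constructor
  · rintro ⟨t, ht⟩
    have hm : w + t ≠ 0 := fun h => he (by linear_combination -ht + (w - t) * h)
    refine ⟨w + t, hm, ?_⟩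
    field_simp
    linear_combination -ht
  · rintro ⟨m, hm, rfl⟩
    exact ⟨(m - e / m) / 2, by field_simp; ring⟩

lemma eq_or_eq_div_of_add_div_eq {e m m' : F} (hm : m ≠ 0) (hm' : m' ≠ 0)
    (h : m + e / m = m' + e / m') : m' = m ∨ m' = e / m := by
  have hprod : (m' - m) * (m * m' - e) = 0 := by
    field_simp at h
    linear_combination -h
  rcases mul_eq_zero.1 hprod with h | h
  · exact .inl (by linear_combination h)
  · exact .inr (by field_simp; linear_combination h)

variable [Fintype F] [DecidableEq F]

lemma isSquare_mul_of_not_isSquare {x y : F} (hx : ¬IsSquare x) (hy : ¬IsSquare y) :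
    IsSquare (x * y) := by
  have hx0 : x ≠ 0 := by rintro rfl; exact hx IsSquare.zero
  have hy0 : y ≠ 0 := by rintro rfl; exact hy IsSquare.zero
  rw [← quadraticChar_one_iff_isSquare (mul_ne_zero hx0 hy0), map_mul,
    quadraticChar_neg_one_iff_not_isSquare.2 hx, quadraticChar_neg_one_iff_not_isSquare.2 hy]
  norm_num

lemma two_mul_card_isSquare_sq_sub_le (h2 : (2 : F) ≠ 0) {e : F} (he : ¬IsSquare e) :
    2 * #{w : F | IsSquare (w ^ 2 - e)} ≤ Fintype.card F - 1 := by
  have he0 : e ≠ 0 := by rintro rfl; exact he IsSquare.zero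
  rw [← card_univ, ← card_erase_of_mem (mem_univ 0)]
  refine mul_card_image_le_card_of_maps_to (f := fun m => (m + e / m) / 2) ?_ 2 ?_
  · intro m hm
    simpa [isSquare_sq_sub_iff h2 he0] using ⟨m, ne_of_mem_erase hm, rfl⟩
  · intro w hw
    obtain ⟨m, hm, rfl⟩ := (isSquare_sq_sub_iff h2 he0 w).1 (mem_filter.1 hw).2
    have hne : m ≠ e / m := fun h => he ⟨m, by field_simp at h; linear_combination -h⟩
    calc 2 = #{m, e / m} := (card_pair hne).symm
      _ ≤ _ := by
        refine card_le_card fun m' hm' => ?_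
        rcases mem_insert.1 hm' with rfl | hm'
        · simp [hm]
        · rw [mem_singleton.1 hm']
          simp only [mem_filter, mem_erase, mem_univ]
          refine ⟨⟨div_ne_zero he0 hm, trivial⟩, ?_⟩
          field_simp
          ring

lemma card_add_one_le_two_mul_card_isSquare_sq_sub (h2 : (2 : F) ≠ 0) {e : F} (he0 : e ≠ 0)
    (he : IsSquare e) : Fintype.card F + 1 ≤ 2 * #{w : F | IsSquare (w ^ 2 - e)} := by
  obtain ⟨s, rfl⟩ := he
  have hs : s ≠ 0 := by rintro rfl; simp at he0
  have hsn : s ≠ -s := fun h => hs (by simpa [h2] using (by linear_combination h : 2 * s = 0))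
  set T : Finset F := {w : F | IsSquare (w ^ 2 - s * s)}
  have hsT : {s, -s} ⊆ T := by
    intro w hw
    simp only [mem_insert, mem_singleton] at hw
    simp only [T, mem_filter, mem_univ, true_and]
    exact ⟨0, by rcases hw with rfl | rfl <;> ring⟩
  -- `(m + s² / m) / 2 = ± s` only for `m = ± s`, so the fibres over `± s` are singletons.
  have hmaps : ∀ m ∈ ({0, s, -s} : Finset F)ᶜ, (m + s * s / m) / 2 ∈ T \ {s, -s} := by
    intro m hm
    simp only [mem_compl, mem_insert, mem_singleton, not_or] at hm
    obtain ⟨hm0, hms, hmns⟩ := hm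
    simp only [mem_sdiff, mem_insert, mem_singleton, not_or, T, mem_filter, mem_univ, true_and]
    refine ⟨(isSquare_sq_sub_iff h2 he0 _).2 ⟨m, hm0, rfl⟩, fun h => hms ?_,
      fun h => hmns ?_⟩
    · field_simp at h
      exact sub_eq_zero.1 (pow_eq_zero_iff two_ne_zero |>.1 (by linear_combination h))
    · field_simp at h
      exact eq_neg_of_add_eq_zero_left
        (pow_eq_zero_iff two_ne_zero |>.1 (by linear_combination h))
  have hfib : ∀ w ∈ T \ {s, -s},
      #{m ∈ ({0, s, -s} : Finset F)ᶜ | (m + s * s / m) / 2 = w} ≤ 2 := by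
    intro w _
    rcases eq_empty_or_nonempty {m ∈ ({0, s, -s} : Finset F)ᶜ | (m + s * s / m) / 2 = w}
      with h | ⟨m, hm⟩
    · rw [h, card_empty]
      omega
    have hm0 : m ≠ 0 := by simp_all
    refine (card_le_card fun m' hm' => ?_).trans (card_le_two (a := m) (b := s * s / m))
    have hm'0 : m' ≠ 0 := by simp_all
    have := eq_or_eq_div_of_add_div_eq hm0 hm'0
      ((div_left_inj' h2).1 ((mem_filter.1 hm).2.trans (mem_filter.1 hm').2.symm))
    simpa using this
  have h3 : #({0, s, -s} : Finset F) = 3 := by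
    rw [card_insert_of_notMem (by simp [hs, hs.symm]), card_pair hsn]
  have hcard := card_le_mul_card_image_of_maps_to hmaps 2 hfib
  rw [card_compl, h3, card_sdiff_of_subset hsT, card_pair hsn] at hcard
  have hT2 : 2 ≤ #T := card_pair hsn ▸ card_le_card hsT
  omega

lemma card_add_one_le_two_mul_card_isSquare_mul_sq_sub (h2 : (2 : F) ≠ 0) {D c : F}
    (hc0 : c ≠ 0) (hc : IsSquare c) (hne : ∃ u, IsSquare (D * u ^ 2 - c)) :
    Fintype.card F + 1 ≤ 2 * #{u : F | IsSquare (D * u ^ 2 - c)} := by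
  by_cases hD0 : D = 0
  · obtain ⟨u₀, hu₀⟩ := hne
    have huniv : ({u : F | IsSquare (D * u ^ 2 - c)} : Finset F) = univ :=
      eq_univ_of_forall fun u => by
        simp only [mem_filter, mem_univ, true_and, hD0, zero_mul, zero_sub] at hu₀ ⊢
        exact hu₀
    rw [huniv, card_univ]
    have := Fintype.one_lt_card (α := F)
    omega
  by_cases hD : IsSquare D
  · obtain ⟨s, rfl⟩ := hD
    have hs : s ≠ 0 := by rintro rfl; simp at hD0
    refine (card_add_one_le_two_mul_card_isSquare_sq_sub h2 hc0 hc).trans ?_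
    refine Nat.mul_le_mul_left 2 <|
      card_le_card_of_injOn (fun w => w / s) (fun w hw => ?_) (fun w _ w' _ h => ?_)
    · simp only [coe_filter, mem_univ, true_and, Set.mem_ofPred_eq] at hw ⊢
      convert hw using 2
      field_simp
    · simpa [hs] using h
  · have hcD : ¬IsSquare (c * D) := by
      rintro ⟨t, ht⟩
      obtain ⟨r, rfl⟩ := hc
      have hr : r ≠ 0 := by rintro rfl; simp at hc0
      exact hD ⟨t / r, by field_simp; linear_combination ht⟩
    -- `D (D u² - c) = (D u)² - c D`, and the product of two non-squares is a square.
    have hcompl : #({u : F | IsSquare (D * u ^ 2 - c)} : Finset F)ᶜ ≤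
        #{w : F | IsSquare (w ^ 2 - c * D)} := by
      refine card_le_card_of_injOn (fun u => D * u) (fun u hu => ?_) (fun u _ u' _ h => ?_)
      · simp only [coe_compl, coe_filter, mem_univ, true_and, Set.mem_compl_iff,
          Set.mem_ofPred_eq] at hu ⊢
        convert isSquare_mul_of_not_isSquare hu hD using 1
        ring
      · simpa [hD0] using h
    have hT := two_mul_card_isSquare_sq_sub_le h2 hcD
    rw [card_compl] at hcompl
    have hle := card_le_univ ({u : F | IsSquare (D * u ^ 2 - c)} : Finset F)
    have := Fintype.card_pos (α := F)
    omega

open Classical in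
noncomputable def conicFst (a : F) : Finset F := {u | ∃ v, IsConicPt a (u, v)}

omit [DecidableEq F] in
lemma mem_conicFst {a u : F} : u ∈ conicFst a ↔ ∃ v, IsConicPt a (u, v) := by
  simp [conicFst]

omit [DecidableEq F] in
lemma mem_conicFst_iff_isSquare (h2 : (2 : F) ≠ 0) {a : F} (ha : a ≠ 0) (u : F) :
    u ∈ conicFst a ↔ IsSquare ((9 * a ^ 2 - 4) * u ^ 2 - 4 * a ^ 2) := by
  rw [mem_conicFst]
  constructor
  · rintro ⟨v, hv, -⟩
    exact ⟨2 * v - 3 * a * u, by unfold OnConic at hv; linear_combination (-4) * hv⟩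
  · rintro ⟨t, ht⟩
    refine ⟨(3 * a * u + t) / 2, ?_, fun h => ha h.1⟩
    unfold OnConic
    field_simp
    linear_combination -ht

lemma card_add_one_le_two_mul_card_conicFst (hF : ringChar F ≠ 2) {a : F}
    (h : ∃ w, IsConicPt a w) : Fintype.card F + 1 ≤ 2 * #(conicFst a) := by
  have h2 := Ring.two_ne_zero hF
  obtain ⟨⟨u₀, v₀⟩, hw, hw0⟩ := h
  rcases eq_or_ne a 0 with rfl | ha
  · have hu₀ : u₀ ≠ 0 := by
      rintro rfl
      unfold OnConic at hw
      exact hw0 ⟨rfl, by simpa using hw⟩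
    have hsub : univ.erase 0 ⊆ conicFst (0 : F) := by
      intro u hu
      refine mem_conicFst.2
        ⟨u * v₀ / u₀, ?_, fun h => ne_of_mem_erase hu (congrArg Prod.fst h.2)⟩
      unfold OnConic at hw ⊢
      field_simp
      linear_combination u ^ 2 * hw
    have hcard := card_le_card hsub
    rw [card_erase_of_mem (mem_univ _), card_univ] at hcard
    have hodd : Fintype.card F % 2 = 1 := by
      have := (FiniteField.even_card_iff_char_two (F := F)).not.1 hF
      omega
    have := Fintype.one_lt_card (α := F)
    omega
  · have hconic :
        conicFst a = ({u | IsSquare ((9 * a ^ 2 - 4) * u ^ 2 - 4 * a ^ 2)} : Finset F) := by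
      ext u
      rw [mem_conicFst_iff_isSquare h2 ha, mem_filter, and_iff_right (mem_univ u)]
    rw [hconic]
    have h2a : 2 * a ≠ 0 := mul_ne_zero h2 ha
    refine card_add_one_le_two_mul_card_isSquare_mul_sq_sub h2
      (by convert mul_ne_zero h2a h2a using 1; ring) ⟨2 * a, by ring⟩ ⟨u₀, ?_⟩
    exact (mem_conicFst_iff_isSquare h2 ha u₀).1 (mem_conicFst.2 ⟨v₀, hw, hw0⟩)

lemma conicFst_inter_nonempty (hF : ringChar F ≠ 2) {a b : F} (ha : ∃ w, IsConicPt a w)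
    (hb : ∃ w, IsConicPt b w) : (conicFst a ∩ conicFst b).Nonempty := by
  have hca := card_add_one_le_two_mul_card_conicFst hF ha
  have hcb := card_add_one_le_two_mul_card_conicFst hF hb
  exact inter_nonempty_of_card_lt_card_add_card (subset_univ _) (subset_univ _)
    (by rw [card_univ]; omega)

end Count

section Triples

variable {p : ℕ}

lemma insertCoord_mem_Xstar_iff (i : Fin 3) (a : ZMod p) (w : ZMod p × ZMod p) :
    insertCoord i a w ∈ Xstar p ↔ IsConicPt a w :=
  and_congr (isMarkoff_insertCoord_iff i a w) (not_congr (insertCoord_eq_zero_iff i a w))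

lemma isConicPt_otherCoords_of_mem_Ci {i : Fin 3} {a : ZMod p} {x : ZMod p × ZMod p × ZMod p}
    (hx : x ∈ Ci p i a) : IsConicPt a (otherCoords i x) := by
  obtain ⟨hx, rfl⟩ := hx
  rwa [← insertCoord_mem_Xstar_iff i, insertCoord_coord_otherCoords]

lemma ordi_insertCoord (i : Fin 3) (a : ZMod p) (w : ZMod p × ZMod p) :
    ordi p i (insertCoord i a w) = sInf {n | 0 < n ∧ (conicRot a)^[n] w = w} := by
  simp only [ordi, rot_iterate_insertCoord, (insertCoord_injective i a).eq_iff]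

lemma ordi_eq_of_mem_Ci [Fact p.Prime] (h2 : (2 : ZMod p) ≠ 0) {i : Fin 3} {a : ZMod p}
    {x z : ZMod p × ZMod p × ZMod p} (hx : x ∈ Ci p i a) (hz : z ∈ Ci p i a) :
    ordi p i z = ordi p i x := by
  have hx' := isConicPt_otherCoords_of_mem_Ci hx
  have hz' := isConicPt_otherCoords_of_mem_Ci hz
  rw [← insertCoord_coord_otherCoords i x, ← insertCoord_coord_otherCoords i z, hx.2, hz.2,
    ordi_insertCoord, ordi_insertCoord]
  congr 1
  ext n
  exact and_congr_right fun _ =>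
    ⟨hz'.iterate_conicRot_eq_self h2 hx', hx'.iterate_conicRot_eq_self h2 hz'⟩

lemma exists_mem_Ci_coord_eq {i k : Fin 3} (hki : k ≠ i) {a c v : ZMod p}
    (h : IsConicPt a (c, v)) : ∃ z ∈ Ci p i a, coord k z = c := by
  obtain ⟨w, hw, hk⟩ := exists_coord_insertCoord_eq hki h
  exact ⟨insertCoord i a w, ⟨(insertCoord_mem_Xstar_iff i a w).2 hw, coord_insertCoord i a w⟩,
    hk⟩

end Triples

theorem stmt_12_general (p : ℕ) (hp : p.Prime) (hp3 : 3 < p)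
    (x y : ZMod p × ZMod p × ZMod p) (i j : Fin 3)
    (hx : x ∈ Cage p) (hy : y ∈ Cage p)
    (hxi : ordp p x = ordi p i x ∧
      (ordi p i x = p - 1 ∨ ordi p i x = p + 1 ∨ ordi p i x = 2 * p)) :
    ∃ z ∈ Cage p, ∃ k : Fin 3,
      (Ci p i (coord i x) ∩ Ci p k (coord k z)).Nonempty ∧
      (Ci p j (coord j y) ∩ Ci p k (coord k z)).Nonempty := by
  have : Fact p.Prime := ⟨hp⟩
  have hF : ringChar (ZMod p) ≠ 2 := by rw [ZMod.ringChar_zmod_n]; omega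
  have hxC : x ∈ Ci p i (coord i x) := ⟨hx.1, rfl⟩
  have hyC : y ∈ Ci p j (coord j y) := ⟨hy.1, rfl⟩
  obtain ⟨c, hc⟩ := conicFst_inter_nonempty hF
    ⟨_, isConicPt_otherCoords_of_mem_Ci hxC⟩ ⟨_, isConicPt_otherCoords_of_mem_Ci hyC⟩
  obtain ⟨⟨v, hv⟩, ⟨v', hv'⟩⟩ :=
    And.imp mem_conicFst.1 mem_conicFst.1 (Finset.mem_inter.1 hc)
  obtain ⟨k, hki, hkj⟩ := (by decide : ∀ i j : Fin 3, ∃ k, k ≠ i ∧ k ≠ j) i j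
  obtain ⟨z, hz, hzk⟩ := exists_mem_Ci_coord_eq hki hv
  obtain ⟨w, hw, hwk⟩ := exists_mem_Ci_coord_eq hkj hv'
  have hzmax : IsMax p z := ⟨i, ordi_eq_of_mem_Ci (Ring.two_ne_zero hF) hz hxC ▸ hxi.2⟩
  exact ⟨z, ⟨hz.1, hzmax⟩, k, ⟨z, hz, hz.1, rfl⟩, ⟨w, hw, hw.1, hwk.trans hzk.symm⟩⟩

theorem stmt_12 (p : ℕ) (hp : p.Prime) (hp3 : 3 < p)
    (x y : ZMod p × ZMod p × ZMod p) (i j : Fin 3)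
    (hx : x ∈ Cage p) (hy : y ∈ Cage p)
    (hxi : ordp p x = ordi p i x ∧
      (ordi p i x = p - 1 ∨ ordi p i x = p + 1 ∨ ordi p i x = 2 * p))
    (hyj : ordp p y = ordi p j y ∧
      (ordi p j y = p - 1 ∨ ordi p j y = p + 1 ∨ ordi p j y = 2 * p)) :
    ∃ z ∈ Cage p, ∃ k : Fin 3,
      (Ci p i (coord i x) ∩ Ci p k (coord k z)).Nonempty ∧
      (Ci p j (coord j y) ∩ Ci p k (coord k z)).Nonempty :=
  stmt_12_general p hp hp3 x y i j hx hy hxi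

end Markoff
end

section
/- Let p be a prime with p ≡ 1 (mod 4), let i ∈ Z/pZ satisfy i² = −1, and write 2/3 for 2·3⁻¹ in Z/pZ. Let x⁺ = (2/3, 1, 1 + (2/3)i) and x⁻ = (2/3, 1, 1 − (2/3)i). Then the orbit of x⁺ under rot₁ is M⁺ = {(2/3, 1 + (2/3)in, 1 + (2/3)i(n+1)) : n ∈ Z}, the orbit of x⁻ under rot₁ is M⁻ = {(2/3, 1 − (2/3)in, 1 − (2/3)i(n+1)) : n ∈ Z}, these two orbits are disjoint, each contains exactly p elements, and C₁(2/3) = M⁺ ∪ M⁻. -/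
namespace Markoff

variable {R : Type*} [CommRing R]

/-! On the plane `x₁ = 2/3` we have `3x₁ = 2`, so the Markoff equation becomes
`(x₃ - x₂)² = -(2/3)²`: the conic `C₁(2/3)` is the union of the two parallel lines
`x₃ - x₂ = ±(2/3)i`. On such a line `rot₁` is the translation `(x₂, x₃) ↦ (x₃, x₃ + (x₃ - x₂))`,
so each line is a single orbit with `p` points, and the lines are disjoint since `2i ≠ 0`. -/

section CommRing

variable {R : Type*} [CommRing R]

theorem rotPerm_zero_apply (x : R × R × R) :
    rotPerm 0 x = (x.1, x.2.2, 3 * x.1 * x.2.2 - x.2.1) := rfl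

theorem rotPerm_zero_apply_succ {a : R} (ha : 3 * a = 2) (e t : R) :
    rotPerm 0 (a, 1 + e * t, 1 + e * (t + 1)) = (a, 1 + e * (t + 1), 1 + e * (t + 1 + 1)) := by
  rw [rotPerm_zero_apply]
  ext <;> dsimp only
  linear_combination (1 + e * (t + 1)) * ha

theorem zpow_rotPerm_zero_apply {a : R} (ha : 3 * a = 2) (e : R) (n : ℤ) :
    (rotPerm 0 ^ n) (a, 1, 1 + e) = (a, 1 + e * n, 1 + e * (n + 1)) := by
  induction n using Int.induction_on with
  | zero => simp
  | succ n ih =>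
    rw [add_comm, zpow_add, zpow_one, Equiv.Perm.mul_apply, ih,
      rotPerm_zero_apply_succ ha]
    push_cast
    ring_nf
  | pred n ih =>
    rw [sub_eq_add_neg, add_comm, zpow_add, zpow_neg_one, Equiv.Perm.mul_apply, ih,
      Equiv.Perm.inv_eq_iff_eq, rotPerm_zero_apply_succ ha]
    push_cast
    ring_nf

theorem setOf_zpow_rotPerm_zero_apply {a : R} (ha : 3 * a = 2) (e : R) :
    {y | ∃ n : ℤ, (rotPerm 0 ^ n) (a, 1, 1 + e) = y} =
      {y : R × R × R | ∃ n : ℤ, y = (a, 1 + e * n, 1 + e * (n + 1))} := by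
  simp only [zpow_rotPerm_zero_apply ha, eq_comm]

theorem isMarkoff_iff_sq_sub {a : R} (ha : 3 * a = 2) (b d : R) :
    IsMarkoff (a, b, d) ↔ (d - b) ^ 2 = -a ^ 2 := by
  unfold IsMarkoff
  constructor
  · intro h
    linear_combination h + b * d * ha
  · intro h
    linear_combination h - b * d * ha

theorem ncard_setOf_fst_eq_sub_eq (a e : R) :
    {x : R × R × R | x.1 = a ∧ x.2.2 - x.2.1 = e}.ncard = Nat.card R := by
  convert Set.ncard_range_of_injective (f := fun b : R => (a, b, b + e)) fun b b' h => by
    simpa using h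
  ext ⟨a', b, d⟩
  simp only [Set.mem_range, Set.mem_ofPred_eq, Prod.mk.injEq]
  constructor
  · rintro ⟨rfl, hd⟩
    exact ⟨b, rfl, rfl, by linear_combination -hd⟩
  · rintro ⟨b', rfl, rfl, rfl⟩
    exact ⟨rfl, by ring⟩

end CommRing

section Domain

variable {R : Type*} [CommRing R] [NoZeroDivisors R]

theorem isMarkoff_iff_sub_eq {a i : R} (ha : 3 * a = 2) (hi : i ^ 2 = -1) (b d : R) :
    IsMarkoff (a, b, d) ↔ d - b = a * i ∨ d - b = -(a * i) := by
  rw [isMarkoff_iff_sq_sub ha, ← sq_eq_sq_iff_eq_or_eq_neg, mul_pow, hi]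
  ring_nf

end Domain

section ZMod

variable {p : ℕ} [Fact p.Prime]

theorem setOf_exists_int_eq_setOf_sub_eq (a : ZMod p) {e : ZMod p} (he : e ≠ 0) :
    {y : ZMod p × ZMod p × ZMod p | ∃ n : ℤ, y = (a, 1 + e * n, 1 + e * (n + 1))} =
      {x | x.1 = a ∧ x.2.2 - x.2.1 = e} := by
  ext ⟨a', b, d⟩
  simp only [Set.mem_ofPred_eq, Prod.mk.injEq]
  constructor
  · rintro ⟨n, rfl, rfl, rfl⟩
    exact ⟨rfl, by ring⟩
  · rintro ⟨rfl, hd⟩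
    obtain ⟨n, hn⟩ := ZMod.intCast_surjective ((b - 1) / e)
    have hb : e * ((b - 1) / e) = b - 1 := mul_div_cancel₀ _ he
    refine ⟨n, rfl, ?_, ?_⟩ <;> rw [hn]
    · linear_combination -hb
    · linear_combination hd - hb

theorem ci_zero_eq_union {a i : ZMod p} (ha : 3 * a = 2) (ha0 : a ≠ 0) (hi : i ^ 2 = -1) :
    Ci p 0 a = {x | x.1 = a ∧ x.2.2 - x.2.1 = a * i} ∪ {x | x.1 = a ∧ x.2.2 - x.2.1 = -(a * i)} := by
  ext ⟨a', b, d⟩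
  simp only [Ci, Xstar, coord, Set.mem_ofPred_eq, Set.mem_union, Matrix.cons_val_zero]
  constructor
  · rintro ⟨⟨hM, -⟩, rfl⟩
    simpa using (isMarkoff_iff_sub_eq ha hi b d).1 hM
  · rintro (⟨rfl, h⟩ | ⟨rfl, h⟩) <;>
      exact ⟨⟨(isMarkoff_iff_sub_eq ha hi b d).2 (by tauto), by simp [ha0]⟩, rfl⟩

end ZMod

theorem stmt_17 (p : ℕ) (hp : p.Prime) (hp4 : p % 4 = 1)
    (i : ZMod p) (hi : i ^ 2 = -1) :
    ({y | ∃ n : ℤ, (rotPerm 0 ^ n) ((2 * (3 : ZMod p)⁻¹, 1,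
          1 + 2 * (3 : ZMod p)⁻¹ * i) : ZMod p × ZMod p × ZMod p) = y} =
        {y : ZMod p × ZMod p × ZMod p | ∃ n : ℤ,
          y = (2 * (3 : ZMod p)⁻¹, 1 + 2 * (3 : ZMod p)⁻¹ * i * (n : ZMod p),
            1 + 2 * (3 : ZMod p)⁻¹ * i * ((n : ZMod p) + 1))}) ∧
    ({y | ∃ n : ℤ, (rotPerm 0 ^ n) ((2 * (3 : ZMod p)⁻¹, 1,
          1 - 2 * (3 : ZMod p)⁻¹ * i) : ZMod p × ZMod p × ZMod p) = y} =
        {y : ZMod p × ZMod p × ZMod p | ∃ n : ℤ,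
          y = (2 * (3 : ZMod p)⁻¹, 1 - 2 * (3 : ZMod p)⁻¹ * i * (n : ZMod p),
            1 - 2 * (3 : ZMod p)⁻¹ * i * ((n : ZMod p) + 1))}) ∧
    Disjoint
      {y : ZMod p × ZMod p × ZMod p | ∃ n : ℤ,
        y = (2 * (3 : ZMod p)⁻¹, 1 + 2 * (3 : ZMod p)⁻¹ * i * (n : ZMod p),
          1 + 2 * (3 : ZMod p)⁻¹ * i * ((n : ZMod p) + 1))}
      {y : ZMod p × ZMod p × ZMod p | ∃ n : ℤ,
        y = (2 * (3 : ZMod p)⁻¹, 1 - 2 * (3 : ZMod p)⁻¹ * i * (n : ZMod p),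
          1 - 2 * (3 : ZMod p)⁻¹ * i * ((n : ZMod p) + 1))} ∧
    {y : ZMod p × ZMod p × ZMod p | ∃ n : ℤ,
        y = (2 * (3 : ZMod p)⁻¹, 1 + 2 * (3 : ZMod p)⁻¹ * i * (n : ZMod p),
          1 + 2 * (3 : ZMod p)⁻¹ * i * ((n : ZMod p) + 1))}.ncard = p ∧
    {y : ZMod p × ZMod p × ZMod p | ∃ n : ℤ,
        y = (2 * (3 : ZMod p)⁻¹, 1 - 2 * (3 : ZMod p)⁻¹ * i * (n : ZMod p),
          1 - 2 * (3 : ZMod p)⁻¹ * i * ((n : ZMod p) + 1))}.ncard = p ∧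
    Ci p 0 (2 * (3 : ZMod p)⁻¹) =
      {y : ZMod p × ZMod p × ZMod p | ∃ n : ℤ,
        y = (2 * (3 : ZMod p)⁻¹, 1 + 2 * (3 : ZMod p)⁻¹ * i * (n : ZMod p),
          1 + 2 * (3 : ZMod p)⁻¹ * i * ((n : ZMod p) + 1))} ∪
      {y : ZMod p × ZMod p × ZMod p | ∃ n : ℤ,
        y = (2 * (3 : ZMod p)⁻¹, 1 - 2 * (3 : ZMod p)⁻¹ * i * (n : ZMod p),
          1 - 2 * (3 : ZMod p)⁻¹ * i * ((n : ZMod p) + 1))} := by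
  have : Fact p.Prime := ⟨hp⟩
  have hp5 : 5 ≤ p := by
    have := hp.two_le
    omega
  have hcast_ne_zero (n : ℕ) (hn : 0 < n) (hnp : n < p) : (n : ZMod p) ≠ 0 := by
    rw [Ne, ZMod.natCast_eq_zero_iff]
    exact Nat.not_dvd_of_pos_of_lt hn hnp
  have h2 : (2 : ZMod p) ≠ 0 := by exact_mod_cast hcast_ne_zero 2 (by norm_num) (by omega)
  have h3 : (3 : ZMod p) ≠ 0 := by exact_mod_cast hcast_ne_zero 3 (by norm_num) (by omega)
  set c : ZMod p := 2 * (3 : ZMod p)⁻¹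
  have hc : 3 * c = 2 := by rw [mul_left_comm, mul_inv_cancel₀ h3, mul_one]
  have hc0 : c ≠ 0 := mul_ne_zero h2 (inv_ne_zero h3)
  have hci : c * i ≠ 0 := mul_ne_zero hc0 fun h => by simp [h] at hi
  have hminus_eq : {y : ZMod p × ZMod p × ZMod p | ∃ n : ℤ,
        y = (c, 1 - c * i * (n : ZMod p), 1 - c * i * ((n : ZMod p) + 1))} =
      {y | ∃ n : ℤ, y = (c, 1 + -(c * i) * n, 1 + -(c * i) * (n + 1))} := by
    simp only [neg_mul, ← sub_eq_add_neg]
  rw [hminus_eq, sub_eq_add_neg 1 (c * i), setOf_zpow_rotPerm_zero_apply hc,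
    setOf_zpow_rotPerm_zero_apply hc, setOf_exists_int_eq_setOf_sub_eq c hci,
    setOf_exists_int_eq_setOf_sub_eq c (neg_ne_zero.2 hci), ci_zero_eq_union hc hc0 hi,
    ncard_setOf_fst_eq_sub_eq, ncard_setOf_fst_eq_sub_eq, Nat.card_zmod]
  refine ⟨rfl, rfl, Set.disjoint_left.2 fun x hx hx' => ?_, rfl, rfl, rfl⟩
  exact mul_ne_zero h2 hci (by linear_combination hx'.2 - hx.2)

end Markoff
end
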